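/- Let p and q be real numbers with 1/p + 1/q = 1/2. For an arbitrary map M, the sum I_v of the (p,q)-curvatures of all vertices of M plus the sum I_f of the (p,q)-curvatures of all faces of M equals p, i.e. I_v + I_f = p. -/

import Mathlib

open scoped Classical

/-- An abstract combinatorial model of a finite map (a finite, connected and
simply-connected 2-complex embedded in the Euclidean plane), encoded by its
oriented edges (darts), vertices and faces, the boundary cycles of its faces,
its outer boundary cycle, and Euler's formula. -/
structure PMap where
  V : Type
  E : Type
  F : Type
  [vfin : Fintype V]
  [efin : Fintype E]
  [ffin : Fintype F]
  [vdec : DecidableEq V]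
  [edec : DecidableEq E]
  [fdec : DecidableEq F]
  /-- the inverse (oppositely oriented) edge -/
  inv : E → E
  inv_inv : ∀ e, inv (inv e) = e
  inv_ne : ∀ e, inv e ≠ e
  /-- the initial vertex of an oriented edge -/
  src : E → V
  /-- the boundary path of a face: a closed nonempty edge path -/
  bFace : F → List E
  bFace_ne : ∀ f, bFace f ≠ []
  bFace_chain : ∀ f, (bFace f).Chain' fun a b => src (inv a) = src b
  bFace_closed : ∀ f, ∀ a ∈ (bFace f).head?, ∀ b ∈ (bFace f).getLast?, src (inv b) = src a
  /-- the boundary path of the map: a closed edge path -/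
  boundary : List E
  boundary_chain : boundary.Chain' fun a b => src (inv a) = src b
  boundary_closed : ∀ a ∈ boundary.head?, ∀ b ∈ boundary.getLast?, src (inv b) = src a
  /-- every oriented edge occurs exactly once: either in the boundary cycle of
  exactly one face, or in the outer boundary cycle of the map -/
  dart_partition : ∀ e : E, boundary.count e + ∑ f : F, (bFace f).count e = 1
  /-- Euler's formula `V - E + F = 1` (each non-oriented edge is a pair of darts) -/
  euler : 2 * Fintype.card V + 2 * Fintype.card F = Fintype.card E + 2

attribute [instance] PMap.vfin PMap.efin PMap.ffin PMap.vdec PMap.edec PMap.fdec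

namespace PMap

variable (M : PMap)

/-- The terminal vertex of an oriented edge. -/
def tgt (e : M.E) : M.V := M.src (M.inv e)

/-- The degree of a vertex: the number of oriented edges starting at it. -/
def vdeg (o : M.V) : ℕ := (Finset.univ.filter fun e : M.E => M.src e = o).card

/-- The degree of a face: the length of its boundary path. -/
def fdeg (f : M.F) : ℕ := (M.bFace f).length

/-- The perimeter of the map: the length of its boundary path. -/
def perimeter : ℕ := M.boundary.length

/-- The area of the map: the number of its faces. -/
def area : ℕ := Fintype.card M.F

/-- The multiplicity of a vertex: the number of times the boundary path of the
map passes through it. -/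
def mult (o : M.V) : ℕ := (M.boundary.map M.src).count o

/-- The exterior vertices: the vertices of the boundary path. -/
def extVerts : Finset M.V := (M.boundary.map M.src).toFinset

/-- A vertex is exterior if it lies on the boundary path; otherwise interior. -/
def IsExtV (o : M.V) : Prop := o ∈ M.extVerts

/-- An edge is exterior if it belongs to the boundary path of the map. -/
def IsExtEdge (e : M.E) : Prop := e ∈ M.boundary ∨ M.inv e ∈ M.boundary

/-- A face is exterior if its boundary shares an edge with the boundary of the map. -/
def IsExtFace (f : M.F) : Prop := ∃ e ∈ M.bFace f, M.IsExtEdge e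

/-- A face is weakly exterior if it shares a vertex with the boundary of the map. -/
def IsWeaklyExtFace (f : M.F) : Prop := ∃ e ∈ M.bFace f, M.src e ∈ M.extVerts

/-- A face is strongly interior if it shares no vertex with the boundary of the map. -/
def StronglyInterior (f : M.F) : Prop := ¬ M.IsWeaklyExtFace f

/-- A `(p,q)`-map: every interior face has degree at least `p` and every
interior vertex has degree at least `q`. -/
def IsPQ (p q : ℕ) : Prop :=
  (∀ f, ¬ M.IsExtFace f → p ≤ M.fdeg f) ∧ (∀ o, ¬ M.IsExtV o → q ≤ M.vdeg o)

/-- A `{p,q}`-map: a `(p,q)`-map in which every face has degree at least `p`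
and less than `2p`, and every vertex has degree less than `2q`. -/
def IsBracePQ (p q : ℕ) : Prop :=
  M.IsPQ p q ∧ (∀ f, p ≤ M.fdeg f ∧ M.fdeg f < 2 * p) ∧ (∀ o, M.vdeg o < 2 * q)

/-- The map is simple if its boundary path is a simple closed curve. -/
def IsSimple : Prop := (M.boundary.map M.src).Nodup

/-- The `1`-skeleton of the map, as a simple graph. -/
def skel : SimpleGraph M.V where
  Adj u v := u ≠ v ∧ ∃ e, M.src e = u ∧ M.tgt e = v
  symm := by
    constructor
    rintro u v ⟨huv, e, h1, h2⟩
    refine ⟨huv.symm, M.inv e, h2, ?_⟩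
    show M.src (M.inv (M.inv e)) = u
    rw [M.inv_inv]; exact h1
  loopless := by constructor; rintro u ⟨h, -⟩; exact h rfl

/-- The combinatorial path metric on the 1-skeleton. -/
noncomputable def dist (u v : M.V) : ℕ := M.skel.dist u v

/-- The distance from a vertex to the boundary of the map. -/
noncomputable def distToBoundary (o : M.V) : ℕ :=
  sInf {d | ∃ b, M.IsExtV b ∧ M.dist o b = d}

/-- The radius of the map: the maximal distance from a vertex to the boundary. -/
noncomputable def radius : ℕ := sSup {d | ∃ o, M.distToBoundary o = d}

/-- The `(p,q)`-curvature `p - d(Π)` of a face. -/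
noncomputable def faceCurv (p : ℝ) (f : M.F) : ℝ := p - M.fdeg f

/-- The `(p,q)`-curvature `(p/q)(q - d(o)) - μ(o)` of a vertex. -/
noncomputable def vertCurv (p q : ℝ) (o : M.V) : ℝ :=
  p / q * (q - M.vdeg o) - M.mult o

/-- A flat map (submap) of curvature type `(p,q)`: every face has degree
exactly `p` and every interior vertex has degree exactly `q`. -/
def IsFlat (p q : ℕ) : Prop :=
  (∀ f, M.fdeg f = p) ∧ (∀ o, ¬ M.IsExtV o → M.vdeg o = q)

end PMap

/-- An inclusion of a map `N` into a map `M` as a submap. -/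
structure SubmapIncl (N M : PMap) where
  vMap : N.V → M.V
  eMap : N.E → M.E
  fMap : N.F → M.F
  vInj : Function.Injective vMap
  eInj : Function.Injective eMap
  fInj : Function.Injective fMap
  src_comm : ∀ e, M.src (eMap e) = vMap (N.src e)
  inv_comm : ∀ e, M.inv (eMap e) = eMap (N.inv e)
  face_comm : ∀ f, M.bFace (fMap f) = (N.bFace f).map eMap


lemma sum_count_univ {α : Type} [Fintype α] [DecidableEq α] (l : List α) :
    ∑ a : α, l.count a = l.length := by
  simpa using Multiset.sum_count_eq_card (s := (Finset.univ : Finset α))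
    (m := (l : Multiset α)) (fun a _ => Finset.mem_univ a)

/-- Let `p` and `q` be real numbers with `1/p + 1/q = 1/2`.
For an arbitrary map `M`, the sum `I_v` of the `(p,q)`-curvatures of all
vertices of `M` plus the sum `I_f` of the `(p,q)`-curvatures of all faces of
`M` equals `p`. -/
theorem curvature_sum_eq (p q : ℝ) (hp : p ≠ 0) (hq : q ≠ 0)
    (hpq : 1 / p + 1 / q = 1 / 2) (M : PMap) :
    (∑ o : M.V, M.vertCurv p q o) + (∑ f : M.F, M.faceCurv p f) = p := by
  classical
  -- key counting facts
  have hV : ∑ o : M.V, (M.vdeg o : ℝ) = (Fintype.card M.E : ℝ) := by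
    have : ∑ o : M.V, M.vdeg o = Fintype.card M.E := by
      rw [Fintype.card, Finset.card_eq_sum_card_fiberwise
        (f := M.src) (t := Finset.univ) (fun e _ => Finset.mem_univ _)]
      rfl
    exact_mod_cast this
  have hmult : ∑ o : M.V, (M.mult o : ℝ) = (M.perimeter : ℝ) := by
    have : ∑ o : M.V, M.mult o = M.perimeter := by
      unfold PMap.mult PMap.perimeter
      rw [sum_count_univ, List.length_map]
    exact_mod_cast this
  have hF : (M.perimeter : ℝ) + ∑ f : M.F, (M.fdeg f : ℝ) = (Fintype.card M.E : ℝ) := by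
    have : M.perimeter + ∑ f : M.F, M.fdeg f = Fintype.card M.E := by
      have h1 : ∑ e : M.E, (M.boundary.count e + ∑ f : M.F, (M.bFace f).count e)
          = Fintype.card M.E := by
        simp [M.dart_partition]
      rw [Finset.sum_add_distrib, sum_count_univ] at h1
      rw [Finset.sum_comm] at h1
      simp only [sum_count_univ] at h1
      exact h1
    exact_mod_cast this
  have heuler : 2 * (Fintype.card M.V : ℝ) + 2 * (Fintype.card M.F : ℝ)
      = (Fintype.card M.E : ℝ) + 2 := by exact_mod_cast M.euler
  have key : p / q = p / 2 - 1 := by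
    rw [div_eq_iff hq]
    have h2 : 2 * q + 2 * p = p * q := by
      field_simp at hpq
      linarith
    nlinarith [h2]
  have hEn : ∑ f : M.F, (M.fdeg f : ℝ) = (Fintype.card M.E : ℝ) - M.perimeter := by
    linarith
  have hsum : (∑ o : M.V, M.vertCurv p q o) + (∑ f : M.F, M.faceCurv p f)
      = p / q * q * (Fintype.card M.V : ℝ) - p / q * (Fintype.card M.E : ℝ)
        - M.perimeter
        + (p * (Fintype.card M.F : ℝ) - ((Fintype.card M.E : ℝ) - M.perimeter)) := by
    unfold PMap.vertCurv PMap.faceCurv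
    rw [Finset.sum_sub_distrib, Finset.sum_sub_distrib, ← Finset.mul_sum,
      Finset.sum_sub_distrib, Finset.sum_const, Finset.sum_const, hmult, hV, hEn]
    simp only [nsmul_eq_mul, Fintype.card]
    ring
  rw [hsum, div_mul_cancel₀ p hq, key]
  linear_combination (p / 2) * heuler
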